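/- Deductive completeness of IS4C: let Γ be a context and A a type; if for every possible-world model M whose modal accessibility relation R is reflexive and transitive the type ∀ w, ⟦Γ⟧_w → ⟦A⟧_w is inhabited, then there exists an IS4C term t : Γ ⊢ A. The proof is constructive. -/
import Mathlib


namespace IS4C

/-- Types of the Fitch-style calculus: base type ι, functions, box. -/
inductive Ty : Type
  | base : Ty
  | arr : Ty → Ty → Ty
  | box : Ty → Ty

/-- Typing contexts: empty, extension by a type, extension by a lock 🔒. -/
inductive Cx : Type
  | nil : Cx
  | snoc : Cx → Ty → Cx
  | lock : Cx → Cx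

/-- IS4C modal accessibility relation Δ ◁ Γ: Γ extends Δ by variables and any
number of locks; it is reflexive and transitive. -/
inductive Ext : Cx → Cx → Type
  | nil : Ext Γ Γ
  | var : Ext Δ Γ → Ext Δ (.snoc Γ A)
  | lock : Ext Δ Γ → Ext Δ (.lock Γ)

/-- Transitivity of the modal accessibility relation. -/
def transExt : {Δ Γ Θ : Cx} → Ext Δ Γ → Ext Γ Θ → Ext Δ Θ
  | _, _, _, e, .nil => e
  | _, _, _, e, .var e' => .var (transExt e e')
  | _, _, _, e, .lock e' => .lock (transExt e e')

/-- Lock-free extensions of a context. -/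
inductive LFExt : Cx → Cx → Type
  | nil : LFExt Γ Γ
  | var : LFExt Δ Γ → LFExt Δ (.snoc Γ A)

/-- A lock-free extension is a modal accessibility proof. -/
def LFExt.toExt : {Δ Γ : Cx} → LFExt Δ Γ → Ext Δ Γ
  | _, _, .nil => .nil
  | _, _, .var e => .var e.toExt

/-- Order-preserving embeddings Γ ≤ Γ'. -/
inductive Ope : Cx → Cx → Type
  | base : Ope .nil .nil
  | drop : Ope Γ Γ' → Ope Γ (.snoc Γ' A)
  | keep : Ope Γ Γ' → Ope (.snoc Γ A) (.snoc Γ' A)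
  | keepLock : Ope Γ Γ' → Ope (.lock Γ) (.lock Γ')

/-- Identity OPE. -/
def idOpe : (Γ : Cx) → Ope Γ Γ
  | .nil => .base
  | .snoc Γ _ => .keep (idOpe Γ)
  | .lock Γ => .keepLock (idOpe Γ)

/-- A lock-free extension yields an OPE (a sequence of drops). -/
def LFExt.toOpe : {Δ Γ : Cx} → LFExt Δ Γ → Ope Δ Γ
  | _, _, .nil => idOpe _
  | _, _, .var e => .drop e.toOpe

/-- De Bruijn variables (no rule through locks). -/
inductive Var : Cx → Ty → Type
  | zero : Var (.snoc Γ A) A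
  | succ : Var Γ A → Var (.snoc Γ B) A

/-- Intrinsically-typed terms of IS4C. -/
inductive Tm : Cx → Ty → Type
  | var : Var Γ A → Tm Γ A
  | lam : Tm (.snoc Γ A) B → Tm Γ (.arr A B)
  | app : Tm Γ (.arr A B) → Tm Γ A → Tm Γ B
  | box : Tm (.lock Γ) A → Tm Γ (.box A)
  | unbox : Tm Δ (.box A) → Ext Δ Γ → Tm Γ A

/-- Factorization of e : Δ ◁ Γ along an OPE o : Γ ≤ Γ'. -/
def factor : {Δ Γ Γ' : Cx} → Ext Δ Γ → Ope Γ Γ' → (Δ' : Cx) × Ope Δ Δ' × Ext Δ' Γ'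
  | _, _, _, e, .drop o =>
    let f := factor e o
    ⟨f.1, f.2.1, .var f.2.2⟩
  | _, _, _, .nil, o => ⟨_, o, .nil⟩
  | _, _, _, .var e, .keep o =>
    let f := factor e o
    ⟨f.1, f.2.1, .var f.2.2⟩
  | _, _, _, .lock e, .keepLock o =>
    let f := factor e o
    ⟨f.1, f.2.1, .lock f.2.2⟩

/-- Weakening of variables along an OPE. -/
def wkVar : {Γ Γ' : Cx} → Ope Γ Γ' → Var Γ A → Var Γ' A
  | _, _, .drop o, v => .succ (wkVar o v)
  | _, _, .keep _, .zero => .zero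
  | _, _, .keep o, .succ v => .succ (wkVar o v)

/-- Weakening (renaming) of terms along an OPE. -/
def wkTm : {Γ Γ' : Cx} → Ope Γ Γ' → Tm Γ A → Tm Γ' A
  | _, _, o, .var v => .var (wkVar o v)
  | _, _, o, .lam t => .lam (wkTm (.keep o) t)
  | _, _, o, .app t u => .app (wkTm o t) (wkTm o u)
  | _, _, o, .box t => .box (wkTm (.keepLock o) t)
  | _, _, o, .unbox t e => .unbox (wkTm (factor e o).2.1 t) (factor e o).2.2

/-- Substitutions Γ ⊢ˢ s : Δ. -/
inductive Sub : Cx → Cx → Type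
  | empty : Sub Γ .nil
  | snoc : Sub Γ Δ → Tm Γ A → Sub Γ (.snoc Δ A)
  | lock : Sub Θ Δ → Ext Θ Γ → Sub Γ (.lock Δ)

/-- Weakening of substitutions along an OPE. -/
def wkSub : {Γ Γ' Δ : Cx} → Ope Γ Γ' → Sub Γ Δ → Sub Γ' Δ
  | _, _, _, _, .empty => .empty
  | _, _, _, o, .snoc s t => .snoc (wkSub o s) (wkTm o t)
  | _, _, _, o, .lock s e => .lock (wkSub (factor e o).2.1 s) (factor e o).2.2

/-- Identity substitution. -/
def idSub : (Γ : Cx) → Sub Γ Γ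
  | .nil => .empty
  | .snoc Γ _ => .snoc (wkSub (.drop (idOpe Γ)) (idSub Γ)) (.var .zero)
  | .lock Γ => .lock (idSub Γ) (.lock .nil)

/-- Action of a substitution on a variable. -/
def substVar : {Γ Δ : Cx} → Sub Γ Δ → Var Δ A → Tm Γ A
  | _, _, .snoc _ t, .zero => t
  | _, _, .snoc s _, .succ v => substVar s v

/-- Trimming a substitution along the modal accessibility relation. -/
def trimSub : {Γ Δ Θ : Cx} → Sub Γ Δ → Ext Θ Δ → (Θ' : Cx) × Sub Θ' Θ × Ext Θ' Γ
  | Γ, _, _, s, .nil => ⟨Γ, s, .nil⟩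
  | _, _, _, .snoc s _, .var e => trimSub s e
  | _, _, _, .lock s e', .lock e =>
    let f := trimSub s e
    ⟨f.1, f.2.1, transExt f.2.2 e'⟩

/-- Application of a substitution to a term. -/
def subst : {Γ Δ : Cx} → Sub Γ Δ → Tm Δ A → Tm Γ A
  | _, _, s, .var v => substVar s v
  | _, _, s, .lam t => .lam (subst (.snoc (wkSub (.drop (idOpe _)) s) (.var .zero)) t)
  | _, _, s, .app t u => .app (subst s t) (subst s u)
  | _, _, s, .box t => .box (subst (.lock s (.lock .nil)) t)
  | _, _, s, .unbox t e => .unbox (subst (trimSub s e).2.1 t) (trimSub s e).2.2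

/-- The equational theory ≈ of IS4C. -/
inductive Conv : {Γ : Cx} → {A : Ty} → Tm Γ A → Tm Γ A → Prop
  | refl (t : Tm Γ A) : Conv t t
  | symm : Conv t u → Conv u t
  | trans : Conv t u → Conv u v → Conv t v
  | congLam : Conv t t' → Conv (.lam t) (.lam t')
  | congApp : Conv t t' → Conv u u' → Conv (.app t u) (.app t' u')
  | congBox : Conv t t' → Conv (.box t) (.box t')
  | congUnbox {t t' : Tm Δ (.box A)} {e : Ext Δ Γ} :
      Conv t t' → Conv (.unbox t e) (.unbox t' e)
  | betaFun (t : Tm (.snoc Γ A) B) (u : Tm Γ A) :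
      Conv (.app (.lam t) u) (subst (.snoc (idSub Γ) u) t)
  | etaFun (t : Tm Γ (.arr A B)) :
      Conv t (.lam (.app (wkTm (.drop (idOpe Γ)) t) (.var .zero)))
  | betaBox (t : Tm (.lock Δ) A) (e : Ext Δ Γ) :
      Conv (.unbox (.box t) e) (subst (.lock (idSub Δ) e) t)
  | etaBox (t : Tm Γ (.box A)) :
      Conv t (.box (.unbox t (.lock .nil)))
  | unboxWk {Δ Γ Θ : Cx} {A : Ty} (t : Tm Δ (.box A)) (e : LFExt Δ Γ) (e' : Ext Γ Θ) :
      Conv (.unbox t (transExt e.toExt e')) (.unbox (wkTm e.toOpe t) e')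

end IS4C

namespace IS4C

universe u

/-- A possible-world model: a frame (W, ≤, R) with factorization satisfying
the coherence (functoriality) conditions, together with a functorial valuation
V of the base type. -/
structure PWModel : Type (u + 1) where
  W : Type u
  le : W → W → Type u
  refl : ∀ w, le w w
  trans : ∀ {w w' w''}, le w w' → le w' w'' → le w w''
  trans_assoc : ∀ {w x y z : W} (i : le w x) (j : le x y) (k : le y z),
    trans (trans i j) k = trans i (trans j k)
  refl_trans : ∀ {w x : W} (i : le w x), trans (refl w) i = i
  trans_refl : ∀ {w x : W} (i : le w x), trans i (refl x) = i
  R : W → W → Type u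
  factorW : ∀ {w v v'}, R w v → le v v' → W
  factorLe : ∀ {w v v'} (m : R w v) (i : le v v'), le w (factorW m i)
  factorR : ∀ {w v v'} (m : R w v) (i : le v v'), R (factorW m i) v'
  factorW_refl : ∀ {w v} (m : R w v), factorW m (refl v) = w
  factorLe_refl : ∀ {w v} (m : R w v), HEq (factorLe m (refl v)) (refl w)
  factorR_refl : ∀ {w v} (m : R w v), HEq (factorR m (refl v)) m
  factorW_trans : ∀ {w v v' v''} (m : R w v) (i : le v v') (j : le v' v''),
    factorW m (trans i j) = factorW (factorR m i) j
  factorLe_trans : ∀ {w v v' v''} (m : R w v) (i : le v v') (j : le v' v''),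
    HEq (factorLe m (trans i j)) (trans (factorLe m i) (factorLe (factorR m i) j))
  factorR_trans : ∀ {w v v' v''} (m : R w v) (i : le v v') (j : le v' v''),
    HEq (factorR m (trans i j)) (factorR (factorR m i) j)
  V : W → Type u
  wkV : ∀ {w w'}, le w w' → V w → V w'
  wkV_refl : ∀ {w} (x : V w), wkV (refl w) x = x
  wkV_trans : ∀ {w w' w''} (i : le w w') (j : le w' w'') (x : V w),
    wkV (trans i j) x = wkV j (wkV i x)

/-- A possible-world model whose modal accessibility relation R is reflexive
and transitive, with unit and associativity coherence laws and factorization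
functorial also in the modal argument (as required for IS4C). -/
structure PWModelS4 extends PWModel.{u} where
  reflR : ∀ w, R w w
  transR : ∀ {w w' w''}, R w w' → R w' w'' → R w w''
  transR_assoc : ∀ {w x y z : W} (m : R w x) (n : R x y) (p : R y z),
    transR (transR m n) p = transR m (transR n p)
  reflR_transR : ∀ {w x : W} (m : R w x), transR (reflR w) m = m
  transR_reflR : ∀ {w x : W} (m : R w x), transR m (reflR x) = m
  factorW_reflR : ∀ {w w'} (i : le w w'), factorW (reflR w) i = w'
  factorLe_reflR : ∀ {w w'} (i : le w w'), HEq (factorLe (reflR w) i) i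
  factorR_reflR : ∀ {w w'} (i : le w w'), HEq (factorR (reflR w) i) (reflR w')
  factorW_transR : ∀ {w x v v'} (n : R w x) (m : R x v) (i : le v v'),
    factorW (transR n m) i = factorW n (factorLe m i)
  factorLe_transR : ∀ {w x v v'} (n : R w x) (m : R x v) (i : le v v'),
    HEq (factorLe (transR n m) i) (factorLe n (factorLe m i))
  factorR_transR : ∀ {w x v v'} (n : R w x) (m : R x v) (i : le v v'),
    HEq (factorR (transR n m) i) (transR (factorR n (factorLe m i)) (factorR m i))

/-- Interpretation of types in a possible-world model. -/
def evalTy (M : PWModel.{u}) : Ty → M.W → Type u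
  | .base, w => M.V w
  | .arr A B, w => ∀ w', M.le w w' → evalTy M A w' → evalTy M B w'
  | .box A, w => ∀ w', M.le w w' → ∀ v, M.R w' v → evalTy M A v

/-- Interpretation of contexts in a possible-world model. -/
def evalCx (M : PWModel.{u}) : Cx → M.W → Type u
  | .nil, _ => PUnit
  | .snoc Γ A, w => evalCx M Γ w × evalTy M A w
  | .lock Γ, w => (u_ : M.W) × evalCx M Γ u_ × M.R u_ w

/-- Monotonicity (semantic weakening) for types. -/
def wkTy (M : PWModel.{u}) : (A : Ty) → ∀ {w w'}, M.le w w' → evalTy M A w → evalTy M A w'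
  | .base, _, _, i, x => M.wkV i x
  | .arr _ _, _, _, i, f => fun w'' j a => f w'' (M.trans i j) a
  | .box _, _, _, i, b => fun w'' j v m => b w'' (M.trans i j) v m

/-- Monotonicity (semantic weakening) for contexts. -/
def wkCx (M : PWModel.{u}) : (Γ : Cx) → ∀ {w w'}, M.le w w' → evalCx M Γ w → evalCx M Γ w'
  | .nil, _, _, _, _ => PUnit.unit
  | .snoc Γ A, _, _, i, γ => (wkCx M Γ i γ.1, wkTy M A i γ.2)
  | .lock Γ, _, _, i, γ => ⟨M.factorW γ.2.2 i, wkCx M Γ (M.factorLe γ.2.2 i) γ.2.1, M.factorR γ.2.2 i⟩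

/-- Looking up a variable in an environment. -/
def lookup (M : PWModel.{u}) : {Γ : Cx} → {A : Ty} → Var Γ A → ∀ {w}, evalCx M Γ w → evalTy M A w
  | _, _, .zero, _, γ => γ.2
  | _, _, .succ v, _, γ => lookup M v γ.1

/-- Trimming an environment along the (reflexive and transitive) modal
accessibility relation. -/
def trimEnv (M : PWModelS4.{u}) :
    {Δ Γ : Cx} → Ext Δ Γ → ∀ {w}, evalCx M.toPWModel Γ w → evalCx M.toPWModel (.lock Δ) w
  | _, _, .nil, w, γ => ⟨w, γ, M.reflR w⟩
  | _, _, .var e, _, γ => trimEnv M e γ.1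
  | _, _, .lock e, _, γ =>
    let d := trimEnv M e γ.2.1
    ⟨d.1, d.2.1, M.transR d.2.2 γ.2.2⟩

/-- Evaluation of IS4C terms in a possible-world model with reflexive and
transitive modal accessibility. -/
def evalTm (M : PWModelS4.{u}) :
    {Γ : Cx} → {A : Ty} → Tm Γ A → ∀ w, evalCx M.toPWModel Γ w → evalTy M.toPWModel A w
  | _, _, .var v, _, γ => lookup M.toPWModel v γ
  | _, _, .lam t, _, γ => fun w' i a => evalTm M t w' (wkCx M.toPWModel _ i γ, a)
  | _, _, .app t u_, w, γ => evalTm M t w γ w (M.refl w) (evalTm M u_ w γ)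
  | _, _, .box t, _, γ => fun w' i v m => evalTm M t v ⟨w', wkCx M.toPWModel _ i γ, m⟩
  | _, _, .unbox t e, w, γ =>
    let d := trimEnv M e γ
    evalTm M t d.1 d.2.1 d.1 (M.refl d.1) w d.2.2

/-! ### Auxiliary machinery for the syntactic model -/

/-- Transitivity of lock-free extensions. -/
def transLF {a b : Cx} (l : LFExt a b) : {c : Cx} → LFExt b c → LFExt a c
  | _, .nil => l
  | _, .var l' => .var (transLF l l')

lemma transLF_nil : ∀ {a b : Cx} (l : LFExt a b), transLF .nil l = l
  | _, _, .nil => rfl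
  | _, _, .var l => congrArg LFExt.var (transLF_nil l)

lemma transLF_assoc : ∀ {a b c d : Cx} (i : LFExt a b) (j : LFExt b c) (k : LFExt c d),
    transLF (transLF i j) k = transLF i (transLF j k)
  | _, _, _, _, _, _, .nil => rfl
  | _, _, _, _, i, j, .var k => congrArg LFExt.var (transLF_assoc i j k)

/-- Transitivity of modal accessibility (with good reduction behaviour). -/
def extTrans {a b : Cx} (e : Ext a b) : {c : Cx} → Ext b c → Ext a c
  | _, .nil => e
  | _, .var e' => .var (extTrans e e')
  | _, .lock e' => .lock (extTrans e e')

/-- Embedding of lock-free extensions into modal accessibility. -/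
def lfToExt {Δ Γ : Cx} (l : LFExt Δ Γ) : Ext Δ Γ :=
  match l with
  | .nil => .nil
  | .var e => .var (lfToExt e)

lemma lfToExt_transLF : ∀ {a b c : Cx} (i : LFExt a b) (j : LFExt b c),
    lfToExt (transLF i j) = extTrans (lfToExt i) (lfToExt j)
  | _, _, _, _, .nil => rfl
  | _, _, _, i, .var j => congrArg Ext.var (lfToExt_transLF i j)

lemma extTrans_nil : ∀ {a b : Cx} (e : Ext a b), extTrans .nil e = e
  | _, _, .nil => rfl
  | _, _, .var e => congrArg Ext.var (extTrans_nil e)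
  | _, _, .lock e => congrArg Ext.lock (extTrans_nil e)

lemma extTrans_assoc : ∀ {a b c d : Cx} (m : Ext a b) (n : Ext b c) (p : Ext c d),
    extTrans (extTrans m n) p = extTrans m (extTrans n p)
  | _, _, _, _, _, _, .nil => rfl
  | _, _, _, _, m, n, .var p => congrArg Ext.var (extTrans_assoc m n p)
  | _, _, _, _, m, n, .lock p => congrArg Ext.lock (extTrans_assoc m n p)

/-- Factorization of a modal accessibility proof along a lock-free extension. -/
def fac {Δ Γ Γ' : Cx} (e : Ext Δ Γ) (l : LFExt Γ Γ') :
    (Δ' : Cx) × LFExt Δ Δ' × Ext Δ' Γ' :=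
  match e with
  | .nil => ⟨Γ', l, .nil⟩
  | .var e' => ⟨Δ, .nil, extTrans (.var e') (lfToExt l)⟩
  | .lock e' => ⟨Δ, .nil, extTrans (.lock e') (lfToExt l)⟩

lemma fac_nil_r {Δ Γ : Cx} (e : Ext Δ Γ) : fac e .nil = ⟨Δ, .nil, e⟩ := by
  cases e <;> rfl

/-- Nonemptiness of the shape of an accessibility proof. -/
def Ext.isCons : {Δ Γ : Cx} → Ext Δ Γ → Prop
  | _, _, .nil => False
  | _, _, .var _ => True
  | _, _, .lock _ => True

lemma isCons_extTrans {a b c : Cx} (e : Ext a b) (x : Ext b c) (h : e.isCons) :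
    (extTrans e x).isCons := by
  cases x <;> first | exact h | trivial

lemma fac_cons {Δ Γ Γ' : Cx} (e : Ext Δ Γ) (h : e.isCons) (l : LFExt Γ Γ') :
    fac e l = ⟨Δ, .nil, extTrans e (lfToExt l)⟩ := by
  cases e with
  | nil => exact h.elim
  | var e => rfl
  | lock e => rfl

lemma fac_trans {Δ Γ Γ₁ Γ₂ : Cx} (e : Ext Δ Γ) (i : LFExt Γ Γ₁) (j : LFExt Γ₁ Γ₂) :
    fac e (transLF i j) =
      ⟨(fac (fac e i).2.2 j).1, transLF (fac e i).2.1 (fac (fac e i).2.2 j).2.1,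
        (fac (fac e i).2.2 j).2.2⟩ := by
  cases e with
  | nil => rfl
  | var e =>
      show (⟨Δ, .nil, extTrans (.var e) (lfToExt (transLF i j))⟩ :
        (Δ' : Cx) × LFExt Δ Δ' × Ext Δ' Γ₂) = _
      rw [show (fac (Ext.var e) i) = ⟨Δ, .nil, extTrans (.var e) (lfToExt i)⟩ from rfl]
      rw [fac_cons (extTrans (.var e) (lfToExt i)) (isCons_extTrans _ _ trivial) j]
      rw [lfToExt_transLF, ← extTrans_assoc]
      rfl
  | lock e =>
      show (⟨Δ, .nil, extTrans (.lock e) (lfToExt (transLF i j))⟩ :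
        (Δ' : Cx) × LFExt Δ Δ' × Ext Δ' Γ₂) = _
      rw [show (fac (Ext.lock e) i) = ⟨Δ, .nil, extTrans (.lock e) (lfToExt i)⟩ from rfl]
      rw [fac_cons (extTrans (.lock e) (lfToExt i)) (isCons_extTrans _ _ trivial) j]
      rw [lfToExt_transLF, ← extTrans_assoc]
      rfl

lemma fac_extTrans {w x v v' : Cx} (n : Ext w x) (m : Ext x v) (i : LFExt v v') :
    fac (extTrans n m) i =
      ⟨(fac n (fac m i).2.1).1, (fac n (fac m i).2.1).2.1,
        extTrans (fac n (fac m i).2.1).2.2 (fac m i).2.2⟩ := by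
  cases m with
  | nil => rfl
  | var m =>
      show fac (.var (extTrans n m)) i = _
      rw [show fac (Ext.var m) i = ⟨x, .nil, extTrans (.var m) (lfToExt i)⟩ from rfl]
      rw [fac_nil_r n]
      show (⟨w, .nil, extTrans (.var (extTrans n m)) (lfToExt i)⟩ :
          (Δ' : Cx) × LFExt w Δ' × Ext Δ' v') =
        ⟨w, .nil, extTrans n (extTrans (.var m) (lfToExt i))⟩
      rw [← extTrans_assoc]
      rfl
  | lock m =>
      show fac (.lock (extTrans n m)) i = _
      rw [show fac (Ext.lock m) i = ⟨x, .nil, extTrans (.lock m) (lfToExt i)⟩ from rfl]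
      rw [fac_nil_r n]
      show (⟨w, .nil, extTrans (.lock (extTrans n m)) (lfToExt i)⟩ :
          (Δ' : Cx) × LFExt w Δ' × Ext Δ' v') =
        ⟨w, .nil, extTrans n (extTrans (.lock m) (lfToExt i))⟩
      rw [← extTrans_assoc]
      rfl

/-- The syntactic possible-world model: worlds are contexts, `≤` is lock-free
extension, `R` is modal accessibility, and the valuation is (the truncation of)
terms of base type. -/
def synModel : PWModelS4.{u} where
  W := ULift.{u} Cx
  le a b := ULift.{u} (LFExt a.down b.down)
  refl _ := ⟨.nil⟩
  trans i j := ⟨transLF i.down j.down⟩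
  trans_assoc i j k := congrArg ULift.up (transLF_assoc i.down j.down k.down)
  refl_trans i := by cases i; exact congrArg ULift.up (transLF_nil _)
  trans_refl i := by cases i; rfl
  R a b := ULift.{u} (Ext a.down b.down)
  factorW m i := ⟨(fac m.down i.down).1⟩
  factorLe m i := ⟨(fac m.down i.down).2.1⟩
  factorR m i := ⟨(fac m.down i.down).2.2⟩
  factorW_refl m := by
    show ULift.up (fac m.down .nil).1 = _
    rw [fac_nil_r]
  factorLe_refl m := by
    show HEq (ULift.up (fac m.down .nil).2.1) _
    rw [fac_nil_r]
  factorR_refl m := by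
    show HEq (ULift.up (fac m.down .nil).2.2) _
    rw [fac_nil_r]
  factorW_trans m i j := by
    show ULift.up (fac m.down (transLF i.down j.down)).1 = _
    rw [fac_trans]
  factorLe_trans m i j := by
    show HEq (ULift.up (fac m.down (transLF i.down j.down)).2.1) _
    rw [fac_trans]
  factorR_trans m i j := by
    show HEq (ULift.up (fac m.down (transLF i.down j.down)).2.2) _
    rw [fac_trans]
  V w := ULift.{u} (PLift (Nonempty (Tm w.down .base)))
  wkV i x := ⟨⟨x.down.down.elim fun t => ⟨wkTm i.down.toOpe t⟩⟩⟩
  wkV_refl x := rfl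
  wkV_trans i j x := rfl
  reflR _ := ⟨.nil⟩
  transR m n := ⟨extTrans m.down n.down⟩
  transR_assoc m n p := congrArg ULift.up (extTrans_assoc m.down n.down p.down)
  reflR_transR m := by cases m; exact congrArg ULift.up (extTrans_nil _)
  transR_reflR m := by cases m; rfl
  factorW_reflR i := by cases i; rfl
  factorLe_reflR i := by cases i; rfl
  factorR_reflR i := by cases i; rfl
  factorW_transR n m i := by
    show ULift.up (fac (extTrans n.down m.down) i.down).1 = _
    rw [fac_extTrans]
  factorLe_transR n m i := by
    show HEq (ULift.up (fac (extTrans n.down m.down) i.down).2.1) _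
    rw [fac_extTrans]
  factorR_transR n m i := by
    show HEq (ULift.up (fac (extTrans n.down m.down) i.down).2.2) _
    rw [fac_extTrans]

mutual
/-- Reflection of (truncated) terms into the syntactic model. -/
def reflect : (A : Ty) → (Γ : Cx) → Nonempty (Tm Γ A) →
    evalTy (synModel.{u}).toPWModel A ⟨Γ⟩
  | .base, _, h => ⟨⟨h⟩⟩
  | .arr A B, _, h => fun w' i a =>
      reflect B w'.down
        (h.elim fun t => (reify A w'.down a).down.down.elim fun u =>
          ⟨.app (wkTm i.down.toOpe t) u⟩)
  | .box A, _, h => fun w' i v m =>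
      reflect A v.down (h.elim fun t => ⟨.unbox (wkTm i.down.toOpe t) m.down⟩)

/-- Reification of semantic values into (truncated) terms. -/
def reify : (A : Ty) → (Γ : Cx) → evalTy (synModel.{u}).toPWModel A ⟨Γ⟩ →
    ULift.{u} (PLift (Nonempty (Tm Γ A)))
  | .base, _, x => ⟨⟨x.down.down⟩⟩
  | .arr A B, Γ, f =>
      ⟨⟨(reify B (Γ.snoc A)
        (f ⟨Γ.snoc A⟩ ⟨.var .nil⟩ (reflect A (Γ.snoc A) ⟨.var .zero⟩))).down.down.elim
        fun t => ⟨.lam t⟩⟩⟩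
  | .box A, Γ, b =>
      ⟨⟨(reify A Γ.lock (b ⟨Γ⟩ ⟨.nil⟩ ⟨Γ.lock⟩ ⟨.lock .nil⟩)).down.down.elim
        fun t => ⟨.box t⟩⟩⟩
end

/-- The identity environment in the syntactic model. -/
def idEnv : (Γ : Cx) → evalCx (synModel.{u}).toPWModel Γ ⟨Γ⟩
  | .nil => PUnit.unit
  | .snoc Γ A =>
      (wkCx (synModel.{u}).toPWModel Γ ⟨.var .nil⟩ (idEnv Γ),
        reflect A (Γ.snoc A) ⟨.var .zero⟩)
  | .lock Γ => ⟨⟨Γ⟩, idEnv Γ, ⟨.lock .nil⟩⟩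

/-- Deductive completeness of IS4C: if in every possible-world model M with a
reflexive-transitive frame the type ∀ w, ⟦Γ⟧_w → ⟦A⟧_w is inhabited, then
there is a term Γ ⊢ A of IS4C. -/
theorem is4c_deductive_completeness (Γ : Cx) (A : Ty)
    (h : ∀ M : PWModelS4.{u}, Nonempty (∀ w, evalCx M.toPWModel Γ w → evalTy M.toPWModel A w)) :
    Nonempty (Tm Γ A) := by
  exact (h synModel.{u}).elim fun f => (reify A Γ (f ⟨Γ⟩ (idEnv Γ))).down.down

end IS4C
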